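/- arXiv:1110.3434 — 7 statements merged into one kernel-verified Lean document; each statement's English description precedes it below -/
import Mathlib

section
/- For 0 ≤ i ≤ d, F_i ∘ F_i' ∘ F_i = F_i and F_i' ∘ F_i ∘ F_i' = F_i'. -/
/-!
For `x ∈ U i`, the vector `x - F'ᵢ x` lies in `U'₀ + ⋯ + U'ᵢ₋₁`, which equals `U₀ + ⋯ + Uᵢ₋₁` and
is therefore killed by `Fᵢ`; hence `Fᵢ (F'ᵢ x) = Fᵢ x = x`. Since `Fᵢ` maps `V` into `Uᵢ`, this gives
`Fᵢ ∘ F'ᵢ ∘ Fᵢ = Fᵢ`, and the other identity follows by symmetry.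
-/

open Finset

theorem iSup_Iio_eq_iSup_Iio_iSup_Iic {ι α : Type*} [Preorder ι] [LocallyFiniteOrderBot ι]
    [CompleteLattice α] (f : ι → α) (i : ι) :
    ⨆ j ∈ Iio i, f j = ⨆ k ∈ Iio i, ⨆ j ∈ Iic k, f j := by
  refine le_antisymm (iSup₂_le fun j hj => ?_) (iSup₂_le fun k hk => iSup₂_le fun j hj => ?_)
  · exact le_iSup₂_of_le j hj (le_iSup₂_of_le j (mem_Iic.2 le_rfl) le_rfl)
  · exact le_iSup₂_of_le j (mem_Iio.2 ((mem_Iic.1 hj).trans_lt (mem_Iio.1 hk))) le_rfl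

theorem iSup_Iio_eq_of_iSup_Iic_eq {ι α : Type*} [Preorder ι] [LocallyFiniteOrderBot ι]
    [CompleteLattice α] {f g : ι → α} {i : ι}
    (h : ∀ k < i, ⨆ j ∈ Iic k, f j = ⨆ j ∈ Iic k, g j) :
    ⨆ j ∈ Iio i, f j = ⨆ j ∈ Iio i, g j := by
  rw [iSup_Iio_eq_iSup_Iio_iSup_Iic f, iSup_Iio_eq_iSup_Iio_iSup_Iic g]
  exact iSup_congr fun k => iSup_congr fun hk => h k (mem_Iio.1 hk)

section

variable {ι R M : Type*} [Ring R] [AddCommGroup M] [Module R M]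
  {U : ι → Submodule R M} {P : M →ₗ[R] M} {i : ι}

theorem range_le_of_iSup_eq_top (hU : iSup U = ⊤) (hid : ∀ x ∈ U i, P x = x)
    (hzero : ∀ j, i ≠ j → ∀ x ∈ U j, P x = 0) : LinearMap.range P ≤ U i := by
  rw [LinearMap.range_eq_map, ← hU, Submodule.map_iSup]
  refine iSup_le fun j => Submodule.map_le_iff_le_comap.2 fun x hx => ?_
  rcases eq_or_ne i j with rfl | hne
  · simpa [hid x hx] using hx
  · simp [hzero j hne x hx]

theorem comp_comp_eq_self_of_iSup_eq_top (hU : iSup U = ⊤) (hid : ∀ x ∈ U i, P x = x)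
    (hzero : ∀ j, i ≠ j → ∀ x ∈ U j, P x = 0) {Q : M →ₗ[R] M}
    (hQ : ∀ x ∈ U i, P (Q x) = x) : P ∘ₗ Q ∘ₗ P = P :=
  LinearMap.ext fun x => hQ (P x) (range_le_of_iSup_eq_top hU hid hzero ⟨x, rfl⟩)

variable [PartialOrder ι] [LocallyFiniteOrderBot ι]

theorem iSup_Iio_le_ker (hzero : ∀ j, i ≠ j → ∀ x ∈ U j, P x = 0) :
    ⨆ j ∈ Iio i, U j ≤ LinearMap.ker P :=
  iSup₂_le fun j hj x hx => hzero j (mem_Iio.1 hj).ne' x hx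

theorem sub_apply_mem_iSup_Iio (hid : ∀ x ∈ U i, P x = x)
    (hzero : ∀ j, i ≠ j → ∀ x ∈ U j, P x = 0) {x : M} (hx : x ∈ ⨆ j ∈ Iic i, U j) :
    x - P x ∈ ⨆ j ∈ Iio i, U j := by
  suffices ⨆ j ∈ Iic i, U j ≤ (⨆ j ∈ Iio i, U j).comap (LinearMap.id - P) from this hx
  refine iSup₂_le fun j hj y hy => ?_
  rw [Submodule.mem_comap, LinearMap.sub_apply, LinearMap.id_apply]
  rcases eq_or_ne i j with rfl | hne
  · simp [hid y hy]
  · rw [hzero j hne y hy, sub_zero]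
    exact le_iSup₂ (f := fun j (_ : j ∈ Iio i) => U j) j
      (mem_Iio.2 ((mem_Iic.1 hj).lt_of_ne hne.symm)) hy

theorem apply_apply_eq_self_of_iSup_Iic_eq {U' : ι → Submodule R M} {P' : M →ₗ[R] M}
    (hpartial : ∀ k ≤ i, ⨆ j ∈ Iic k, U j = ⨆ j ∈ Iic k, U' j)
    (hid : ∀ x ∈ U i, P x = x) (hzero : ∀ j, i ≠ j → ∀ x ∈ U j, P x = 0)
    (hid' : ∀ x ∈ U' i, P' x = x) (hzero' : ∀ j, i ≠ j → ∀ x ∈ U' j, P' x = 0)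
    {x : M} (hx : x ∈ U i) : P (P' x) = x := by
  have hx' : x ∈ ⨆ j ∈ Iic i, U' j :=
    hpartial i le_rfl ▸ le_iSup₂ (f := fun j (_ : j ∈ Iic i) => U j) i (mem_Iic.2 le_rfl) hx
  have hlower : ⨆ j ∈ Iio i, U' j = ⨆ j ∈ Iio i, U j :=
    (iSup_Iio_eq_of_iSup_Iic_eq fun k hk => hpartial k hk.le).symm
  have hker : P (x - P' x) = 0 :=
    iSup_Iio_le_ker hzero (hlower ▸ sub_apply_mem_iSup_Iio hid' hzero' hx')
  rw [map_sub, sub_eq_zero, hid x hx] at hker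
  exact hker.symm

end

theorem stmt1_general {K V : Type*} [Field K] [AddCommGroup V] [Module K V]
    (d : ℕ)
    (U U' : ℕ → Submodule K V)
    (hUtop : iSup U = ⊤) (hU'top : iSup U' = ⊤)
    (hpartial : ∀ i ≤ d,
      (⨆ h ∈ Finset.Iic i, U h) = (⨆ h ∈ Finset.Iic i, U' h))
    (F F' : ℕ → V →ₗ[K] V)
    (hFid : ∀ i, ∀ x ∈ U i, F i x = x)
    (hFzero : ∀ i j, i ≠ j → ∀ x ∈ U j, F i x = 0)
    (hF'id : ∀ i, ∀ x ∈ U' i, F' i x = x)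
    (hF'zero : ∀ i j, i ≠ j → ∀ x ∈ U' j, F' i x = 0) :
    ∀ i ≤ d, F i ∘ₗ F' i ∘ₗ F i = F i ∧ F' i ∘ₗ F i ∘ₗ F' i = F' i := by
  intro i hi
  have hpart : ∀ k ≤ i, ⨆ j ∈ Iic k, U j = ⨆ j ∈ Iic k, U' j :=
    fun k hk => hpartial k (hk.trans hi)
  exact ⟨comp_comp_eq_self_of_iSup_eq_top hUtop (hFid i) (hFzero i) fun _ =>
      apply_apply_eq_self_of_iSup_Iic_eq hpart (hFid i) (hFzero i) (hF'id i) (hF'zero i),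
    comp_comp_eq_self_of_iSup_eq_top hU'top (hF'id i) (hF'zero i) fun _ =>
      apply_apply_eq_self_of_iSup_Iic_eq (fun k hk => (hpart k hk).symm)
        (hF'id i) (hF'zero i) (hFid i) (hFzero i)⟩

/-- For ,  and . -/
theorem stmt1 {K V : Type*} [Field K] [AddCommGroup V] [Module K V]
    [FiniteDimensional K V] (d : ℕ)
    (U U' : ℕ → Submodule K V)
    (hUbot : ∀ i, d < i → U i = ⊥) (hU'bot : ∀ i, d < i → U' i = ⊥)
    (hUtop : iSup U = ⊤) (hU'top : iSup U' = ⊤)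
    (hUind : iSupIndep U)
    (hU'ind : iSupIndep U')
    (hpartial : ∀ i ≤ d,
      (⨆ h ∈ Finset.Iic i, U h) = (⨆ h ∈ Finset.Iic i, U' h))
    (F F' : ℕ → V →ₗ[K] V)
    (hFid : ∀ i, ∀ x ∈ U i, F i x = x)
    (hFzero : ∀ i j, i ≠ j → ∀ x ∈ U j, F i x = 0)
    (hF'id : ∀ i, ∀ x ∈ U' i, F' i x = x)
    (hF'zero : ∀ i j, i ≠ j → ∀ x ∈ U' j, F' i x = 0) :
    ∀ i ≤ d, F i ∘ₗ F' i ∘ₗ F i = F i ∧ F' i ∘ₗ F i ∘ₗ F' i = F' i :=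
  stmt1_general d U U' hUtop hU'top hpartial F F' hFid hFzero hF'id hF'zero
end

section
/- For 0 ≤ i ≤ d, the restriction of F_i' to U_i is a bijection U_i → U_i', the restriction of F_i to U_i' is a bijection U_i' → U_i, and these two bijections are mutually inverse. -/
/-!
Write `V≤i` for the common partial sum `U 0 ⊔ ⋯ ⊔ U i = U' 0 ⊔ ⋯ ⊔ U' i`. For `h < i` both `F i`
and `F' i` vanish on `U' h ⊆ V≤h = U 0 ⊔ ⋯ ⊔ U h`, while `F' i` is the identity on `U' i`; hence
`F i ∘ F' i = F i` on `V≤i`, and in particular `F i (F' i x) = x` for `x ∈ U i`. By symmetry also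
`F' i (F i y) = y` for `y ∈ U' i`, and since `F i`, `F' i` take values in `U i`, `U' i`, the two
restrictions are mutually inverse bijections.
-/

open Set

section Projections

variable {K V ι : Type*} [Semiring K] [AddCommMonoid V] [Module K V]
  {U U' : ι → Submodule K V} {F F' : ι → V →ₗ[K] V}

lemma range_le_of_iSup_eq_top_s2 (hUtop : iSup U = ⊤) (hFid : ∀ i, ∀ x ∈ U i, F i x = x)
    (hFzero : ∀ i j, i ≠ j → ∀ x ∈ U j, F i x = 0) (i : ι) :
    LinearMap.range (F i) ≤ U i := by
  rw [LinearMap.range_le_iff_comap, eq_top_iff, ← hUtop]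
  refine iSup_le fun j x hx => ?_
  by_cases hij : i = j
  · subst hij
    simpa [hFid i x hx] using hx
  · simp [hFzero i j hij x hx]

lemma biSup_le_ker (hFzero : ∀ i j, i ≠ j → ∀ x ∈ U j, F i x = 0) {i : ι} {s : Finset ι}
    (hi : i ∉ s) : ⨆ j ∈ s, U j ≤ LinearMap.ker (F i) :=
  iSup₂_le fun j hj x hx => hFzero i j (ne_of_mem_of_not_mem hj hi).symm x hx

variable [PartialOrder ι] [LocallyFiniteOrderBot ι]

lemma biSup_Iic_le_eqLocus {i : ι}
    (hpartial : ∀ j ≤ i, ⨆ h ∈ Finset.Iic j, U h = ⨆ h ∈ Finset.Iic j, U' h)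
    (hFzero : ∀ i j, i ≠ j → ∀ x ∈ U j, F i x = 0)
    (hF'id : ∀ i, ∀ x ∈ U' i, F' i x = x)
    (hF'zero : ∀ i j, i ≠ j → ∀ x ∈ U' j, F' i x = 0) :
    ⨆ h ∈ Finset.Iic i, U' h ≤ LinearMap.eqLocus (F i ∘ₗ F' i) (F i) := by
  refine iSup₂_le fun h hh x hx => ?_
  rcases (Finset.mem_Iic.1 hh).eq_or_lt with rfl | hlt
  · simp [hF'id h x hx]
  · have hx_partial : x ∈ ⨆ k ∈ Finset.Iic h, U k := by
      rw [hpartial h hlt.le]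
      exact Submodule.mem_iSup_of_mem h
        (Submodule.mem_iSup_of_mem (Finset.mem_Iic.2 le_rfl) hx)
    have hFx : F i x = 0 :=
      biSup_le_ker hFzero (fun hi => hlt.not_ge (Finset.mem_Iic.1 hi)) hx_partial
    simp [hF'zero i h hlt.ne' x hx, hFx]

lemma apply_apply_eq_self {i : ι}
    (hpartial : ∀ j ≤ i, ⨆ h ∈ Finset.Iic j, U h = ⨆ h ∈ Finset.Iic j, U' h)
    (hFid : ∀ i, ∀ x ∈ U i, F i x = x)
    (hFzero : ∀ i j, i ≠ j → ∀ x ∈ U j, F i x = 0)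
    (hF'id : ∀ i, ∀ x ∈ U' i, F' i x = x)
    (hF'zero : ∀ i j, i ≠ j → ∀ x ∈ U' j, F' i x = 0) {x : V} (hx : x ∈ U i) :
    F i (F' i x) = x := by
  have hx_partial : x ∈ ⨆ h ∈ Finset.Iic i, U' h := by
    rw [← hpartial i le_rfl]
    exact Submodule.mem_iSup_of_mem i (Submodule.mem_iSup_of_mem (Finset.mem_Iic.2 le_rfl) hx)
  have := biSup_Iic_le_eqLocus hpartial hFzero hF'id hF'zero hx_partial
  rwa [LinearMap.mem_eqLocus, LinearMap.comp_apply, hFid i x hx] at this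

end Projections

theorem stmt2_general {K V : Type*} [Field K] [AddCommGroup V] [Module K V]
    (d : ℕ)
    (U U' : ℕ → Submodule K V)
    (hUtop : iSup U = ⊤) (hU'top : iSup U' = ⊤)
    (hpartial : ∀ i ≤ d,
      (⨆ h ∈ Finset.Iic i, U h) = (⨆ h ∈ Finset.Iic i, U' h))
    (F F' : ℕ → V →ₗ[K] V)
    (hFid : ∀ i, ∀ x ∈ U i, F i x = x)
    (hFzero : ∀ i j, i ≠ j → ∀ x ∈ U j, F i x = 0)
    (hF'id : ∀ i, ∀ x ∈ U' i, F' i x = x)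
    (hF'zero : ∀ i j, i ≠ j → ∀ x ∈ U' j, F' i x = 0) :
    ∀ i ≤ d,
      Set.BijOn (F' i) (U i) (U' i) ∧
      Set.BijOn (F i) (U' i) (U i) ∧
      (∀ x ∈ U i, F i (F' i x) = x) ∧
      (∀ y ∈ U' i, F' i (F i y) = y) := by
  intro i hi
  have hmaps : MapsTo (F i) (U' i) (U i) := fun x _ =>
    range_le_of_iSup_eq_top_s2 hUtop hFid hFzero i ⟨x, rfl⟩
  have hmaps' : MapsTo (F' i) (U i) (U' i) := fun x _ =>
    range_le_of_iSup_eq_top_s2 hU'top hF'id hF'zero i ⟨x, rfl⟩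
  have hinv : InvOn (F i) (F' i) (U i) (U' i) :=
    ⟨fun _ hx => apply_apply_eq_self (fun j hj => hpartial j (hj.trans hi))
        hFid hFzero hF'id hF'zero hx,
      fun _ hy => apply_apply_eq_self (fun j hj => (hpartial j (hj.trans hi)).symm)
        hF'id hF'zero hFid hFzero hy⟩
  exact ⟨hinv.bijOn hmaps' hmaps, hinv.symm.bijOn hmaps hmaps', hinv.1, hinv.2⟩

theorem stmt2 {K V : Type*} [Field K] [AddCommGroup V] [Module K V]
    [FiniteDimensional K V] (d : ℕ)
    (U U' : ℕ → Submodule K V)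
    (hUbot : ∀ i, d < i → U i = ⊥) (hU'bot : ∀ i, d < i → U' i = ⊥)
    (hUtop : iSup U = ⊤) (hU'top : iSup U' = ⊤)
    (hUind : iSupIndep U)
    (hU'ind : iSupIndep U')
    (hpartial : ∀ i ≤ d,
      (⨆ h ∈ Finset.Iic i, U h) = (⨆ h ∈ Finset.Iic i, U' h))
    (F F' : ℕ → V →ₗ[K] V)
    (hFid : ∀ i, ∀ x ∈ U i, F i x = x)
    (hFzero : ∀ i j, i ≠ j → ∀ x ∈ U j, F i x = 0)
    (hF'id : ∀ i, ∀ x ∈ U' i, F' i x = x)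
    (hF'zero : ∀ i j, i ≠ j → ∀ x ∈ U' j, F' i x = 0) :
    ∀ i ≤ d,
      Set.BijOn (F' i) (U i) (U' i) ∧
      Set.BijOn (F i) (U' i) (U i) ∧
      (∀ x ∈ U i, F i (F' i x) = x) ∧
      (∀ y ∈ U' i, F' i (F i y) = y) :=
  stmt2_general d U U' hUtop hU'top hpartial F F' hFid hFzero hF'id hF'zero
end

section
/- The linear map Δ = Σ_{h=0}^d F_h' ∘ F_h is invertible, and its inverse is Δ' = Σ_{h=0}^d F_h ∘ F_h'. -/
/-!
Write `Vᵢ = U₀ + ⋯ + Uᵢ = U'₀ + ⋯ + U'ᵢ`. Every `F'ₖ` with `k > i` vanishes on `Vᵢ ⊇ Uᵢ`, and every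
`Fᵢ` with `i > k` vanishes on `Vₖ ⊇ U'ₖ`; so `F'ₖ Fᵢ = 0` for `i < k` and `Fᵢ F'ₖ = 0` for `k < i`.
Hence `Fᵢ F'ᵢ Fᵢ = Fᵢ (∑ₖ F'ₖ) Fᵢ = Fᵢ`, and expanding `Δ' Δ` with the orthogonality of the `F'ⱼ`
gives `∑ᵢ Fᵢ F'ᵢ Fᵢ = ∑ᵢ Fᵢ = 1`. Exchanging the two decompositions gives `Δ Δ' = 1`.
-/

open Finset

section TriangularIdempotents

variable {R ι : Type*} [Semiring R] [LinearOrder ι] {s : Finset ι} {e e' : ι → R}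

theorem mul_mul_self_eq_self_of_triangular {i : ι} (hi : i ∈ s) (he : IsIdempotentElem (e i))
    (he'_sum : ∑ k ∈ s, e' k = 1) (h_lt : ∀ k ∈ s, i < k → e' k * e i = 0)
    (h_gt : ∀ k ∈ s, k < i → e i * e' k = 0) :
    e i * e' i * e i = e i := by
  calc e i * e' i * e i = ∑ k ∈ s, e i * e' k * e i := by
        refine Eq.symm (sum_eq_single_of_mem i hi fun k hk hki => ?_)
        rcases hki.lt_or_gt with hki | hik
        · rw [h_gt k hk hki, zero_mul]
        · rw [mul_assoc, h_lt k hk hik, mul_zero]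
    _ = e i * e i := by
        rw [← Finset.sum_mul, ← Finset.mul_sum, he'_sum, mul_one]
    _ = e i := he

theorem sum_mul_sum_eq_one_of_triangular (he : ∀ i ∈ s, IsIdempotentElem (e i))
    (he_sum : ∑ i ∈ s, e i = 1) (he' : OrthogonalIdempotents e') (he'_sum : ∑ k ∈ s, e' k = 1)
    (h_lt : ∀ i ∈ s, ∀ k ∈ s, i < k → e' k * e i = 0)
    (h_gt : ∀ i ∈ s, ∀ k ∈ s, k < i → e i * e' k = 0) :
    (∑ i ∈ s, e i * e' i) * (∑ j ∈ s, e' j * e j) = 1 := by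
  calc (∑ i ∈ s, e i * e' i) * (∑ j ∈ s, e' j * e j) = ∑ i ∈ s, e i * e' i * e i := by
        rw [sum_mul]
        refine sum_congr rfl fun i hi => ?_
        rw [mul_sum, sum_eq_single_of_mem i hi fun j _ hji => by
          rw [mul_assoc, ← mul_assoc (e' i), he'.ortho hji.symm, zero_mul, mul_zero]]
        rw [mul_assoc, ← mul_assoc (e' i), (he'.idem i).eq, ← mul_assoc]
    _ = ∑ i ∈ s, e i := sum_congr rfl fun i hi =>
        mul_mul_self_eq_self_of_triangular hi (he i hi) he'_sum (h_lt i hi) (h_gt i hi)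
    _ = 1 := he_sum

end TriangularIdempotents

theorem LinearMap.ext_of_iSup_eq_top {R M N ι : Type*} [Semiring R] [AddCommMonoid M]
    [AddCommMonoid N] [Module R M] [Module R N] {U : ι → Submodule R M} (hU : iSup U = ⊤)
    {f g : M →ₗ[R] N} (h : ∀ i, Set.EqOn f g (U i)) : f = g :=
  eqLocus_eq_top.1 <| top_unique <| hU ▸ iSup_le fun i => le_eqLocus.2 (h i)

structure IsProjectionFamily {R M ι : Type*} [Semiring R] [AddCommMonoid M] [Module R M]
    (U : ι → Submodule R M) (F : ι → Module.End R M) : Prop where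
  apply_of_mem : ∀ i, ∀ x ∈ U i, F i x = x
  apply_of_mem_of_ne : ∀ i j, i ≠ j → ∀ x ∈ U j, F i x = 0

namespace IsProjectionFamily

variable {R M ι : Type*} [Semiring R] [AddCommMonoid M] [Module R M]
  {U U' : ι → Submodule R M} {F F' : ι → Module.End R M}

theorem apply_mem (hF : IsProjectionFamily U F) (hU : iSup U = ⊤) (i : ι) (x : M) :
    F i x ∈ U i := by
  have hle : ⊤ ≤ (U i).comap (F i) := hU ▸ iSup_le fun j y hy => by
    rcases eq_or_ne i j with rfl | hij
    · rw [Submodule.mem_comap, hF.apply_of_mem i y hy]; exact hy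
    · rw [Submodule.mem_comap, hF.apply_of_mem_of_ne i j hij y hy]; exact zero_mem _
  exact hle Submodule.mem_top

theorem orthogonalIdempotents (hF : IsProjectionFamily U F) (hU : iSup U = ⊤) :
    OrthogonalIdempotents F where
  idem i := LinearMap.ext fun x => hF.apply_of_mem i _ (hF.apply_mem hU i x)
  ortho i j hij := LinearMap.ext fun x => hF.apply_of_mem_of_ne i j hij _ (hF.apply_mem hU j x)

theorem sum_eq_one (hF : IsProjectionFamily U F) (hU : iSup U = ⊤) {s : Finset ι}
    (hs : ∀ i ∉ s, U i = ⊥) : ∑ i ∈ s, F i = 1 := by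
  refine LinearMap.ext_of_iSup_eq_top hU fun j x hx => ?_
  by_cases hj : j ∈ s
  · rw [LinearMap.sum_apply,
      sum_eq_single_of_mem j hj fun i _ hij => hF.apply_of_mem_of_ne i j hij x hx]
    exact hF.apply_of_mem j x hx
  · rw [hs j hj, SetLike.mem_coe, Submodule.mem_bot] at hx
    simp [hx]

variable [LinearOrder ι] [LocallyFiniteOrderBot ι]

theorem apply_eq_zero_of_mem_iSup_Iic (hF : IsProjectionFamily U F) {k i : ι} (hki : k < i)
    {x : M} (hx : x ∈ ⨆ h ∈ Iic k, U h) : F i x = 0 := by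
  have hle : ⨆ h ∈ Iic k, U h ≤ LinearMap.ker (F i) := iSup₂_le fun h hh y hy =>
    hF.apply_of_mem_of_ne i h (((mem_Iic.1 hh).trans_lt hki).ne') y hy
  exact hle hx

theorem mul_eq_zero_of_lt (hF : IsProjectionFamily U F) (hU : iSup U = ⊤)
    (hF' : IsProjectionFamily U' F') {i k : ι}
    (hflag : ⨆ h ∈ Iic i, U h = ⨆ h ∈ Iic i, U' h) (hik : i < k) : F' k * F i = 0 :=
  LinearMap.ext fun x => hF'.apply_eq_zero_of_mem_iSup_Iic hik <| hflag ▸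
    (le_iSup₂ (f := fun h (_ : h ∈ Iic i) => U h) i (mem_Iic.2 le_rfl)) (hF.apply_mem hU i x)

theorem sum_mul_sum_eq_one (hF : IsProjectionFamily U F) (hU : iSup U = ⊤)
    (hF' : IsProjectionFamily U' F') (hU' : iSup U' = ⊤) {s : Finset ι}
    (hs : ∀ i ∉ s, U i = ⊥) (hs' : ∀ i ∉ s, U' i = ⊥)
    (hflag : ∀ i ∈ s, ⨆ h ∈ Iic i, U h = ⨆ h ∈ Iic i, U' h) :
    (∑ i ∈ s, F i * F' i) * (∑ i ∈ s, F' i * F i) = 1 :=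
  sum_mul_sum_eq_one_of_triangular (fun i _ => (hF.orthogonalIdempotents hU).idem i)
    (hF.sum_eq_one hU hs) (hF'.orthogonalIdempotents hU') (hF'.sum_eq_one hU' hs')
    (fun i hi _ _ hik => mul_eq_zero_of_lt hF hU hF' (hflag i hi) hik)
    (fun _ _ k hk hki => mul_eq_zero_of_lt hF' hU' hF (hflag k hk).symm hki)

end IsProjectionFamily

theorem stmt3_general {K V : Type*} [Field K] [AddCommGroup V] [Module K V]
    (d : ℕ)
    (U U' : ℕ → Submodule K V)
    (hUbot : ∀ i, d < i → U i = ⊥) (hU'bot : ∀ i, d < i → U' i = ⊥)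
    (hUtop : iSup U = ⊤) (hU'top : iSup U' = ⊤)
    (hpartial : ∀ i ≤ d,
      (⨆ h ∈ Finset.Iic i, U h) = (⨆ h ∈ Finset.Iic i, U' h))
    (F F' : ℕ → V →ₗ[K] V)
    (hFid : ∀ i, ∀ x ∈ U i, F i x = x)
    (hFzero : ∀ i j, i ≠ j → ∀ x ∈ U j, F i x = 0)
    (hF'id : ∀ i, ∀ x ∈ U' i, F' i x = x)
    (hF'zero : ∀ i j, i ≠ j → ∀ x ∈ U' j, F' i x = 0) :
    (∑ h ∈ Finset.range (d + 1), F' h ∘ₗ F h) ∘ₗ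
      (∑ h ∈ Finset.range (d + 1), F h ∘ₗ F' h) = LinearMap.id ∧
    (∑ h ∈ Finset.range (d + 1), F h ∘ₗ F' h) ∘ₗ
      (∑ h ∈ Finset.range (d + 1), F' h ∘ₗ F h) = LinearMap.id := by
  have hF : IsProjectionFamily U F := ⟨hFid, hFzero⟩
  have hF' : IsProjectionFamily U' F' := ⟨hF'id, hF'zero⟩
  have hs : ∀ i ∉ range (d + 1), U i = ⊥ := fun i hi => hUbot i (by simpa using hi)
  have hs' : ∀ i ∉ range (d + 1), U' i = ⊥ := fun i hi => hU'bot i (by simpa using hi)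
  have hflag (i) (hi : i ∈ range (d + 1)) := hpartial i (Nat.lt_succ_iff.1 (mem_range.1 hi))
  exact ⟨hF'.sum_mul_sum_eq_one hU'top hF hUtop hs' hs fun i hi => (hflag i hi).symm,
    hF.sum_mul_sum_eq_one hUtop hF' hU'top hs hs' hflag⟩

theorem stmt3 {K V : Type*} [Field K] [AddCommGroup V] [Module K V]
    [FiniteDimensional K V] (d : ℕ)
    (U U' : ℕ → Submodule K V)
    (hUbot : ∀ i, d < i → U i = ⊥) (hU'bot : ∀ i, d < i → U' i = ⊥)
    (hUtop : iSup U = ⊤) (hU'top : iSup U' = ⊤)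
    (hUind : iSupIndep U)
    (hU'ind : iSupIndep U')
    (hpartial : ∀ i ≤ d,
      (⨆ h ∈ Finset.Iic i, U h) = (⨆ h ∈ Finset.Iic i, U' h))
    (F F' : ℕ → V →ₗ[K] V)
    (hFid : ∀ i, ∀ x ∈ U i, F i x = x)
    (hFzero : ∀ i j, i ≠ j → ∀ x ∈ U j, F i x = 0)
    (hF'id : ∀ i, ∀ x ∈ U' i, F' i x = x)
    (hF'zero : ∀ i j, i ≠ j → ∀ x ∈ U' j, F' i x = 0) :
    (∑ h ∈ Finset.range (d + 1), F' h ∘ₗ F h) ∘ₗ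
      (∑ h ∈ Finset.range (d + 1), F h ∘ₗ F' h) = LinearMap.id ∧
    (∑ h ∈ Finset.range (d + 1), F h ∘ₗ F' h) ∘ₗ
      (∑ h ∈ Finset.range (d + 1), F' h ∘ₗ F h) = LinearMap.id :=
  stmt3_general d U U' hUbot hU'bot hUtop hU'top hpartial F F' hFid hFzero hF'id hF'zero
end

section
/- For 0 ≤ i, j ≤ d+1, ϑ_i − ϑ_j = (q^j − q^i)(1 − q^{d−i−j+1}) / ((1 − q)(1 − q^d)). -/
/-!
Put `c = α₂ - α₃ q⁻ᵈ`. Since `q⁻ʰ = q⁻ᵈ q^(d-h)`, the reflected differences factor as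
`θₕ - θ_{d-h} = c (qʰ - q^(d-h))`; in particular `θ₀ - θ_d = c (1 - qᵈ)`, so distinctness of
`θ₀, θ_d` forces `c ≠ 0` and `q ≠ 1`. Hence `ϑᵢ = ∑_{h<i} (qʰ - q^(d-h)) / (1 - qᵈ)`, a difference
of two geometric sums, which equals `(1 - qⁱ)(1 - q^(d-i+1)) / ((1 - q)(1 - qᵈ))`.
When `d = 0` both sides vanish, as they are divisions by `θ₀ - θ₀` and `1 - q⁰`.
-/

section

variable {K : Type*} [Field K] {q : K}

theorem sum_range_pow_sub_zpow (hq0 : q ≠ 0) (hq1 : q ≠ 1) (n : ℤ) (i : ℕ) :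
    ∑ h ∈ Finset.range i, (q ^ h - q ^ (n - h)) = (1 - q ^ i) * (1 - q ^ (n - i + 1)) / (1 - q) := by
  induction i with
  | zero => simp
  | succ i ih =>
    have hm : n - i = n - (i + 1 : ℕ) + 1 := by push_cast; ring
    rw [Finset.sum_range_succ, ih, hm, zpow_add_one₀ hq0]
    field_simp
    ring

theorem sum_range_pow_sub_zpow_sub_sum (hq0 : q ≠ 0) (hq1 : q ≠ 1) (n : ℤ) (i j : ℕ) :
    ∑ h ∈ Finset.range i, (q ^ h - q ^ (n - h)) - ∑ h ∈ Finset.range j, (q ^ h - q ^ (n - h)) =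
      (q ^ j - q ^ i) * (1 - q ^ (n - i - j + 1)) / (1 - q) := by
  have hi : q ^ (n - i + 1) = q ^ (n - i - j + 1) * q ^ j := by
    rw [← zpow_natCast q j, ← zpow_add₀ hq0]; ring_nf
  have hj : q ^ (n - j + 1) = q ^ (n - i - j + 1) * q ^ i := by
    rw [← zpow_natCast q i, ← zpow_add₀ hq0]; ring_nf
  rw [sum_range_pow_sub_zpow hq0 hq1, sum_range_pow_sub_zpow hq0 hq1, hi, hj, ← sub_div]
  ring

theorem sub_reflect_eq_mul (hq0 : q ≠ 0) (α₁ α₂ α₃ : K) {d h : ℕ} (hh : h ≤ d) :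
    (α₁ + α₂ * q ^ h + α₃ * q⁻¹ ^ h) - (α₁ + α₂ * q ^ (d - h) + α₃ * q⁻¹ ^ (d - h)) =
      (α₂ - α₃ * q⁻¹ ^ d) * (q ^ h - q ^ ((d : ℤ) - h)) := by
  obtain ⟨k, rfl⟩ := Nat.exists_eq_add_of_le hh
  have hk : ((h + k : ℕ) : ℤ) - h = k := by push_cast; ring
  rw [Nat.add_sub_cancel_left, hk, zpow_natCast, inv_pow, inv_pow, inv_pow, pow_add]
  field_simp
  ring

end

theorem stmt10_general {K : Type*} [Field K] (d : ℕ) (q α1 α2 α3 : K)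
    (hq0 : q ≠ 0)
    (θ : ℕ → K) (hθ : ∀ i ≤ d, θ i = α1 + α2 * q ^ i + α3 * q⁻¹ ^ i)
    (hdist : ∀ i ≤ d, ∀ j ≤ d, θ i = θ j → i = j)
    (ϑ : ℕ → K)
    (hϑ : ∀ i ≤ d + 1, ϑ i = ∑ h ∈ Finset.range i, (θ h - θ (d - h)) / (θ 0 - θ d)) :
    ∀ i ≤ d + 1, ∀ j ≤ d + 1,
      ϑ i - ϑ j = (q ^ j - q ^ i) * (1 - q ^ ((d : ℤ) - i - j + 1)) /
        ((1 - q) * (1 - q ^ d)) := by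
  intro i hi j hj
  rcases eq_or_ne (θ 0) (θ d) with hθ0d | hθ0d
  · obtain rfl : d = 0 := (hdist 0 d.zero_le d le_rfl hθ0d).symm
    simp [hϑ i hi, hϑ j hj]
  have hfactor : ∀ h ≤ d, θ h - θ (d - h) = (α2 - α3 * q⁻¹ ^ d) * (q ^ h - q ^ ((d : ℤ) - h)) :=
    fun h hh => by rw [hθ h hh, hθ (d - h) (d.sub_le h), sub_reflect_eq_mul hq0 α1 α2 α3 hh]
  have hθ0d' : θ 0 - θ d = (α2 - α3 * q⁻¹ ^ d) * (1 - q ^ d) := by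
    simpa using hfactor 0 d.zero_le
  have hc : α2 - α3 * q⁻¹ ^ d ≠ 0 := left_ne_zero_of_mul (hθ0d' ▸ sub_ne_zero.mpr hθ0d)
  have hq1 : q ≠ 1 := by
    rintro rfl
    exact hθ0d (sub_eq_zero.mp (by simp [hθ0d']))
  have hϑ' : ∀ i ≤ d + 1, ϑ i = (∑ h ∈ Finset.range i, (q ^ h - q ^ ((d : ℤ) - h))) / (1 - q ^ d) := by
    intro i hi
    rw [hϑ i hi, Finset.sum_div]
    refine Finset.sum_congr rfl fun h hh => ?_
    rw [hfactor h (by simp at hh; omega), hθ0d', mul_div_mul_left _ _ hc]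
  rw [hϑ' i hi, hϑ' j hj, ← sub_div, sum_range_pow_sub_zpow_sub_sum hq0 hq1, div_div]

theorem stmt10 {K : Type*} [Field K] (d : ℕ) (hd : 1 ≤ d) (q α1 α2 α3 : K)
    (hq0 : q ≠ 0) (hq : ∀ k, 1 ≤ k → k ≤ d → q ^ k ≠ 1)
    (θ : ℕ → K) (hθ : ∀ i ≤ d, θ i = α1 + α2 * q ^ i + α3 * q⁻¹ ^ i)
    (hdist : ∀ i ≤ d, ∀ j ≤ d, θ i = θ j → i = j)
    (ϑ : ℕ → K)
    (hϑ : ∀ i ≤ d + 1, ϑ i = ∑ h ∈ Finset.range i, (θ h - θ (d - h)) / (θ 0 - θ d)) :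
    ∀ i ≤ d + 1, ∀ j ≤ d + 1,
      ϑ i - ϑ j = (q ^ j - q ^ i) * (1 - q ^ ((d : ℤ) - i - j + 1)) /
        ((1 - q) * (1 - q ^ d)) :=
  stmt10_general d q α1 α2 α3 hq0 θ hθ hdist ϑ hϑ
end

section
/- For 1 ≤ i ≤ d/2, the subspace U_i decomposes as the direct sum U_i = K_i ⊕ R(U_{i−1}), where K_i = U_i ∩ ker(R^{d−2i+1}). -/
/-
Put `m = d - 2i + 1`. Since `i + m = d - i + 1`, the hypotheses applied to the pair
`(i - 1, i + m)` say that `R ^ (m + 1)` is injective on `U (i - 1)` and maps it onto `U (i + m)`.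
Hence `R ^ m` is injective on `R (U (i - 1)) ⊆ U i` and has the same image there as on all of `U i`,
so `R (U (i - 1))` is a complement of `U i ∩ ker (R ^ m)` in `U i`.
-/

theorem Submodule.eq_inf_ker_sup_of_le_of_map_le {R M N : Type*} [Ring R] [AddCommGroup M]
    [AddCommGroup N] [Module R M] [Module R N] (f : M →ₗ[R] N) {S T : Submodule R M}
    (hTS : T ≤ S) (hmap : S.map f ≤ T.map f) :
    S = S ⊓ LinearMap.ker f ⊔ T := by
  rw [inf_sup_assoc_of_le _ hTS, sup_comm (LinearMap.ker f)]
  exact (inf_eq_left.2 ((LinearMap.map_le_map_iff f).1 hmap)).symm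

theorem Module.End.pow_apply_mem_of_map_le_succ {K V : Type*} [Semiring K] [AddCommMonoid V]
    [Module K V] {U : ℕ → Submodule K V} {R : Module.End K V} {d : ℕ}
    (hR : ∀ i < d, (U i).map R ≤ U (i + 1)) :
    ∀ k a, a + k ≤ d → ∀ x ∈ U a, (R ^ k) x ∈ U (a + k) := by
  intro k
  induction k with
  | zero => simp
  | succ k ih =>
    intro a hak x hx
    rw [pow_succ, Module.End.mul_apply, ← add_comm 1 k, ← add_assoc]
    exact ih (a + 1) (by omega) (R x) (hR a (by omega) ⟨x, hx, rfl⟩)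

theorem stmt16_general {K V : Type*} [Field K] [AddCommGroup V] [Module K V] (d : ℕ)
    (U : ℕ → Submodule K V)
    (R : Module.End K V)
    (hR : ∀ i < d, Submodule.map R (U i) ≤ U (i + 1))
    (hinj : ∀ i j, i ≤ j → j ≤ d → i + j ≤ d →
      ∀ x ∈ U i, (R ^ (j - i)) x = 0 → x = 0)
    (hsurj : ∀ i j, i ≤ j → j ≤ d → d ≤ i + j →
      ∀ y ∈ U j, ∃ x ∈ U i, (R ^ (j - i)) x = y)
    (Kk : ℕ → Submodule K V)
    (hK : ∀ i, 2 * i ≤ d → Kk i = U i ⊓ LinearMap.ker (R ^ (d - 2 * i + 1))) :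
    ∀ i, 1 ≤ i → 2 * i ≤ d →
      U i = Kk i ⊔ Submodule.map R (U (i - 1)) ∧
      Kk i ⊓ Submodule.map R (U (i - 1)) = ⊥ := by
  intro i hi h2i
  set m := d - 2 * i + 1
  have hdist : i + m - (i - 1) = m + 1 := by omega
  have hRU : (U (i - 1)).map R ≤ U i := by
    simpa [Nat.sub_add_cancel hi] using hR (i - 1) (by omega)
  have hmap : (U i).map (R ^ m) ≤ ((U (i - 1)).map R).map (R ^ m) := by
    rintro _ ⟨x, hx, rfl⟩
    obtain ⟨z, hz, hzx⟩ := hsurj (i - 1) (i + m) (by omega) (by omega) (by omega) _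
      (Module.End.pow_apply_mem_of_map_le_succ hR m i (by omega) x hx)
    rw [hdist, pow_succ] at hzx
    exact ⟨R z, ⟨z, hz, rfl⟩, hzx⟩
  have hdisj : LinearMap.ker (R ^ m) ⊓ (U (i - 1)).map R = ⊥ := by
    refine eq_bot_iff.2 ?_
    rintro _ ⟨hker, z, hz, rfl⟩
    have hz0 : z = 0 := hinj (i - 1) (i + m) (by omega) (by omega) (by omega) z hz
      (by rwa [hdist, pow_succ])
    simp [hz0]
  rw [hK i h2i]
  exact ⟨Submodule.eq_inf_ker_sup_of_le_of_map_le _ hRU hmap,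
    eq_bot_iff.2 (hdisj ▸ inf_le_inf_right _ inf_le_right)⟩

theorem stmt16 {K V : Type*} [Field K] [AddCommGroup V] [Module K V]
    [FiniteDimensional K V] (d : ℕ)
    (U : ℕ → Submodule K V)
    (hUbot : ∀ i, d < i → U i = ⊥)
    (hUtop : iSup U = ⊤)
    (hUind : iSupIndep U)
    (R : Module.End K V)
    (hR : ∀ i < d, Submodule.map R (U i) ≤ U (i + 1))
    (hRd : Submodule.map R (U d) = ⊥)
    (hinj : ∀ i j, i ≤ j → j ≤ d → i + j ≤ d →
      ∀ x ∈ U i, (R ^ (j - i)) x = 0 → x = 0)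
    (hsurj : ∀ i j, i ≤ j → j ≤ d → d ≤ i + j →
      ∀ y ∈ U j, ∃ x ∈ U i, (R ^ (j - i)) x = y)
    (Kk : ℕ → Submodule K V)
    (hK : ∀ i, 2 * i ≤ d → Kk i = U i ⊓ LinearMap.ker (R ^ (d - 2 * i + 1))) :
    ∀ i, 1 ≤ i → 2 * i ≤ d →
      U i = Kk i ⊔ Submodule.map R (U (i - 1)) ∧
      Kk i ⊓ Submodule.map R (U (i - 1)) = ⊥ :=
  stmt16_general d U R hR hinj hsurj Kk hK
end

section
/- The dimension of U_i is nondecreasing in i for 0 ≤ i ≤ d/2 and nonincreasing in i for d/2 ≤ i ≤ d; that is, dim U_i ≤ dim U_{i+1} for 0 ≤ i < d/2 and dim U_i ≥ dim U_{i+1} for d/2 ≤ i ≤ d−1. -/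
open Module

namespace Submodule

variable {K V W : Type*} [Field K] [AddCommGroup V] [Module K V] [AddCommGroup W] [Module K W]

theorem finrank_le_of_map_le_of_disjoint_ker {f : V →ₗ[K] W} {P : Submodule K V}
    {Q : Submodule K W} [Module.Finite K Q] (hPQ : P.map f ≤ Q)
    (hker : Disjoint P (LinearMap.ker f)) : finrank K P ≤ finrank K Q := by
  have hinj : Function.Injective (f.domRestrict P) := by
    rw [← LinearMap.ker_eq_bot, LinearMap.ker_domRestrict]
    exact disjoint_iff_comap_eq_bot.mp hker
  calc finrank K P = finrank K (P.map f) := by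
        rw [← LinearMap.range_domRestrict, LinearMap.finrank_range_of_inj hinj]
    _ ≤ finrank K Q := finrank_mono hPQ

theorem finrank_le_of_le_map {f : V →ₗ[K] W} {P : Submodule K V} [Module.Finite K P]
    {Q : Submodule K W} (hQP : Q ≤ P.map f) : finrank K Q ≤ finrank K P :=
  (finrank_mono hQP).trans (finrank_map_le f P)

end Submodule

theorem stmt17_general {K V : Type*} [Field K] [AddCommGroup V] [Module K V]
    [FiniteDimensional K V] (d : ℕ)
    (U : ℕ → Submodule K V)
    (R : Module.End K V)
    (hR : ∀ i < d, Submodule.map R (U i) ≤ U (i + 1))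
    (hinj : ∀ i j, i ≤ j → j ≤ d → i + j ≤ d →
      ∀ x ∈ U i, (R ^ (j - i)) x = 0 → x = 0)
    (hsurj : ∀ i j, i ≤ j → j ≤ d → d ≤ i + j →
      ∀ y ∈ U j, ∃ x ∈ U i, (R ^ (j - i)) x = y) :
    (∀ i, 2 * i < d → Module.finrank K (U i) ≤ Module.finrank K (U (i + 1))) ∧
    (∀ i, d ≤ 2 * i → i + 1 ≤ d →
      Module.finrank K (U (i + 1)) ≤ Module.finrank K (U i)) := by
  have hpow (i : ℕ) : R ^ (i + 1 - i) = R := by rw [Nat.add_sub_cancel_left, pow_one]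
  refine ⟨fun i hi => ?_, fun i hi hid => ?_⟩
  · refine Submodule.finrank_le_of_map_le_of_disjoint_ker (hR i (by omega)) ?_
    rw [LinearMap.disjoint_ker]
    simpa only [hpow] using hinj i (i + 1) i.le_succ (by omega) (by omega)
  · refine Submodule.finrank_le_of_le_map (f := R) fun y hy => ?_
    obtain ⟨x, hx, rfl⟩ := hsurj i (i + 1) i.le_succ hid (by omega) y hy
    exact ⟨x, hx, by rw [hpow]⟩

theorem stmt17 {K V : Type*} [Field K] [AddCommGroup V] [Module K V]
    [FiniteDimensional K V] (d : ℕ)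
    (U : ℕ → Submodule K V)
    (hUbot : ∀ i, d < i → U i = ⊥)
    (hUtop : iSup U = ⊤)
    (hUind : iSupIndep U)
    (R : Module.End K V)
    (hR : ∀ i < d, Submodule.map R (U i) ≤ U (i + 1))
    (hRd : Submodule.map R (U d) = ⊥)
    (hinj : ∀ i j, i ≤ j → j ≤ d → i + j ≤ d →
      ∀ x ∈ U i, (R ^ (j - i)) x = 0 → x = 0)
    (hsurj : ∀ i j, i ≤ j → j ≤ d → d ≤ i + j →
      ∀ y ∈ U j, ∃ x ∈ U i, (R ^ (j - i)) x = y) :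
    (∀ i, 2 * i < d → Module.finrank K (U i) ≤ Module.finrank K (U (i + 1))) ∧
    (∀ i, d ≤ 2 * i → i + 1 ≤ d →
      Module.finrank K (U (i + 1)) ≤ Module.finrank K (U i)) :=
  stmt17_general d U R hR hinj hsurj
end

section
/- Let M denote the commutative subalgebra of End(V) generated by A. Fix 0 ≤ i ≤ d/2 and a nonzero subspace W of V such that E_hW = 0 for 0 ≤ h ≤ i−1 and for d−i+1 ≤ h ≤ d, and such that τ_{i,d−i}(A) restricted to W is injective. Then the M-submodule MW generated by W satisfies MW = W + τ_{i,i+1}(A)W + ... + τ_{i,d−i}(A)W, and the minimal polynomial of the action of A on MW is τ_{i,d−i+1}(x) = (x−θ_i)(x−θ_{i+1})···(x−θ_{d−i}). -/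
open Polynomial

/-!
Since `A = ∑ θ_h E_h`, a polynomial `p` acts on `w ∈ W` by `p(A) w = ∑ p(θ_h) E_h w`, and
only `i ≤ h ≤ d - i` contributes; so `τ_{i,d-i+1}(A)` kills `W`, hence `MW`. Reducing modulo
`τ_{i,d-i+1}` writes every `A^n w` as `r(A) w` with `deg r ≤ d - 2i`, and such an `r` is a
combination of the Newton basis `τ_{i,i}, …, τ_{i,d-i}`; this gives `MW = ∑_j τ_{ij}(A) W`.
Conversely, if `p(A)` kills `MW`, the remainder `r` of `p` kills a nonzero `w ∈ W`. By directness
the leading term `c τ_{i,i+deg r}(A) w` of `r(A) w` vanishes, and injectivity of `τ_{i,d-i}(A)` on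
`W` forces `c = 0`; hence `r = 0`.
-/

/-- The polynomial τ_{ij}(x) = (x - θ_i)(x - θ_{i+1})···(x - θ_{j-1}). -/
noncomputable def tauPoly {K : Type*} [Field K] (θ : ℕ → K) (i j : ℕ) :
    Polynomial K :=
  ∏ h ∈ Finset.Ico i j, (X - C (θ h))

section TauPoly

variable {K : Type*} [Field K] (θ : ℕ → K)

lemma tauPoly_monic (i j : ℕ) : (tauPoly θ i j).Monic :=
  monic_prod_of_monic _ _ fun _ _ => monic_X_sub_C _

lemma natDegree_tauPoly (i j : ℕ) : (tauPoly θ i j).natDegree = j - i := by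
  rw [tauPoly, natDegree_prod _ _ fun _ _ => X_sub_C_ne_zero _]
  simp

lemma tauPoly_mul_tauPoly {i j k : ℕ} (hij : i ≤ j) (hjk : j ≤ k) :
    tauPoly θ i j * tauPoly θ j k = tauPoly θ i k :=
  Finset.prod_Ico_consecutive _ hij hjk

lemma eval_tauPoly_eq_zero {i j h : ℕ} (hh : h ∈ Finset.Ico i j) :
    (tauPoly θ i j).eval (θ h) = 0 := by
  rw [tauPoly, eval_prod]
  exact Finset.prod_eq_zero hh (by simp)

noncomputable def tauSequence (i : ℕ) : Polynomial.Sequence K where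
  elems' n := tauPoly θ i (i + n)
  degree_eq' n := by
    rw [degree_eq_natDegree (tauPoly_monic θ i _).ne_zero, natDegree_tauPoly,
      Nat.add_sub_cancel_left]

lemma degreeLT_le_span_tauPoly (i n : ℕ) :
    degreeLT K n ≤ Submodule.span K (tauPoly θ i '' Set.Ico i (i + n)) := by
  have himage : tauSequence θ i '' Set.Iio n = tauPoly θ i '' Set.Ico i (i + n) := by
    ext p
    constructor
    · rintro ⟨k, hk, rfl⟩
      exact ⟨i + k, ⟨by omega, by simp only [Set.mem_Iio] at hk; omega⟩, rfl⟩
    · rintro ⟨j, ⟨hij, hjn⟩, rfl⟩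
      exact ⟨j - i, by simp only [Set.mem_Iio]; omega, by
        simp only [tauSequence]; congr 1; omega⟩
  rw [← himage, (tauSequence θ i).span_degreeLT fun k _ => by
    simp [tauSequence, (tauPoly_monic θ i _).leadingCoeff]]

end TauPoly

section Spectral

variable {R M ι : Type*} [CommRing R] [AddCommGroup M] [Module R M]

lemma sum_smul_mul_eq_smul [DecidableEq ι] {s : Finset ι} {E : ι → Module.End R M}
    (θ : ι → R) {h : ι} (hh : h ∈ s)
    (hE : ∀ j ∈ s, E j * E h = if j = h then E j else 0) :
    (∑ j ∈ s, θ j • E j) * E h = θ h • E h := by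
  rw [Finset.sum_mul, Finset.sum_eq_single_of_mem h hh fun j hj hjh => by
    rw [smul_mul_assoc, hE j hj, if_neg hjh, smul_zero]]
  rw [smul_mul_assoc, hE h hh, if_pos rfl]

lemma aeval_apply_eq_sum {s : Finset ι} {E : ι → Module.End R M} {θ : ι → R}
    {A : Module.End R M} (hE : ∑ h ∈ s, E h = 1) (hAE : ∀ h ∈ s, A * E h = θ h • E h)
    (p : R[X]) (v : M) :
    aeval A p v = ∑ h ∈ s, p.eval (θ h) • E h v := by
  calc aeval A p v = aeval A p (∑ h ∈ s, E h v) := by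
        rw [← LinearMap.sum_apply, hE, Module.End.one_apply]
    _ = ∑ h ∈ s, p.eval (θ h) • E h v := by
        rw [map_sum]
        refine Finset.sum_congr rfl fun h hh => ?_
        exact Module.End.aeval_apply_of_mem_apply_eq_smul
          (by rw [← Module.End.mul_apply, hAE h hh, LinearMap.smul_apply])

lemma aeval_apply_eq_zero_of_forall {s : Finset ι} {E : ι → Module.End R M} {θ : ι → R}
    {A : Module.End R M} (hE : ∑ h ∈ s, E h = 1) (hAE : ∀ h ∈ s, A * E h = θ h • E h)
    {p : R[X]} {v : M} (hpv : ∀ h ∈ s, p.eval (θ h) = 0 ∨ E h v = 0) :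
    aeval A p v = 0 := by
  rw [aeval_apply_eq_sum hE hAE]
  refine Finset.sum_eq_zero fun h hh => ?_
  rcases hpv h hh with hzero | hzero <;> simp [hzero]

end Spectral

section Cyclic

variable {R M : Type*} [CommRing R] [AddCommGroup M] [Module R M] (A : Module.End R M)
  (W : Submodule R M)

lemma aeval_modByMonic_apply_of_apply_eq_zero {p q : R[X]} {v : M}
    (hv : aeval A q v = 0) : aeval A (p %ₘ q) v = aeval A p v := by
  rw [modByMonic_eq_sub_mul_div p q, mul_comm, map_sub, map_mul, LinearMap.sub_apply,
    Module.End.mul_apply, hv, map_zero, sub_zero]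

lemma map_aeval_le_iSup_map_pow (p : R[X]) : W.map (aeval A p) ≤ ⨆ n, W.map (A ^ n) := by
  rintro _ ⟨w, hw, rfl⟩
  rw [aeval_eq_sum_range, LinearMap.sum_apply]
  exact Submodule.sum_mem _ fun k _ => Submodule.smul_mem _ _
    (Submodule.mem_iSup_of_mem k (Submodule.mem_map_of_mem hw))

lemma iSup_map_pow_le_ker_aeval {p : R[X]} (hW : ∀ w ∈ W, aeval A p w = 0) :
    ⨆ n, W.map (A ^ n) ≤ LinearMap.ker (aeval A p) := by
  refine iSup_le fun n => ?_
  rintro _ ⟨w, hw, rfl⟩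
  have hcomm : Commute (aeval A p) (A ^ n) := by
    simpa using (Commute.all p (X ^ n)).map (aeval A)
  rw [LinearMap.mem_ker, ← Module.End.mul_apply, hcomm.eq, Module.End.mul_apply, hW w hw,
    map_zero]

end Cyclic

section TauImages

variable {K V : Type*} [Field K] [AddCommGroup V] [Module K V] (A : Module.End K V)
  (θ : ℕ → K) (W : Submodule K V)

lemma aeval_apply_mem_iSup_map_tauPoly {i n : ℕ} {p : K[X]} (hp : p.degree < n) {w : V}
    (hw : w ∈ W) :
    aeval A p w ∈ ⨆ j ∈ Finset.Ico i (i + n), W.map (aeval A (tauPoly θ i j)) := by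
  have hspan := degreeLT_le_span_tauPoly θ i n (mem_degreeLT.mpr hp)
  clear hp
  induction hspan using Submodule.span_induction with
  | mem q hq =>
    obtain ⟨j, hj, rfl⟩ := hq
    exact Submodule.mem_iSup_of_mem j (Submodule.mem_iSup_of_mem (by simpa using hj)
      (Submodule.mem_map_of_mem hw))
  | zero => simp
  | add q r _ _ hq hr => simpa using Submodule.add_mem _ hq hr
  | smul c q _ hq => simpa using Submodule.smul_mem _ c hq

variable {θ W} {i m : ℕ}

lemma aeval_tauPoly_apply_ne_zero
    (hinj : ∀ w ∈ W, aeval A (tauPoly θ i m) w = 0 → w = 0) {j : ℕ} (hij : i ≤ j)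
    (hjm : j ≤ m) {w : V} (hw : w ∈ W) (hw0 : w ≠ 0) : aeval A (tauPoly θ i j) w ≠ 0 := by
  intro hzero
  refine hw0 (hinj w hw ?_)
  rw [← tauPoly_mul_tauPoly θ hij hjm, mul_comm, map_mul, Module.End.mul_apply, hzero, map_zero]

lemma disjoint_map_tauPoly_iSup
    (hdirect : iSupIndep fun j : {j : ℕ // i ≤ j ∧ j ≤ m} =>
      W.map (aeval A (tauPoly θ i j)))
    {j : ℕ} (hij : i ≤ j) (hjm : j ≤ m) :
    Disjoint (W.map (aeval A (tauPoly θ i j)))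
      (⨆ k ∈ Finset.Ico i j, W.map (aeval A (tauPoly θ i k))) := by
  refine (hdirect.disjoint_biSup (x := ⟨j, hij, hjm⟩) (y := {k | k.1 < j}) (by simp)).mono_right
    ?_
  refine iSup₂_le fun k hk => ?_
  obtain ⟨hik, hkj⟩ := Finset.mem_Ico.mp hk
  exact le_biSup (fun k : {k : ℕ // i ≤ k ∧ k ≤ m} => W.map (aeval A (tauPoly θ i k)))
    (i := ⟨k, hik, by omega⟩) hkj

lemma eq_zero_of_degree_lt_of_aeval_apply_eq_zero
    (hdirect : iSupIndep fun j : {j : ℕ // i ≤ j ∧ j ≤ m} =>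
      W.map (aeval A (tauPoly θ i j)))
    (hinj : ∀ w ∈ W, aeval A (tauPoly θ i m) w = 0 → w = 0) {w : V} (hw : w ∈ W)
    (hw0 : w ≠ 0) {p : K[X]} (hp : p.degree < (m + 1 - i : ℕ)) (hpw : aeval A p w = 0) :
    p = 0 := by
  by_contra hp0
  set j := i + p.natDegree
  have hjm : j ≤ m := by
    have := (natDegree_lt_iff_degree_lt hp0).mpr hp
    omega
  set lead := C p.leadingCoeff * tauPoly θ i j
  have hdeg : p.degree = lead.degree := by
    rw [degree_C_mul (leadingCoeff_ne_zero.mpr hp0),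
      degree_eq_natDegree (tauPoly_monic θ i j).ne_zero, natDegree_tauPoly,
      degree_eq_natDegree hp0]
    congr 1
    omega
  have hrest : (p - lead).degree < (p.natDegree : ℕ) := by
    refine (degree_sub_lt_left hdeg hp0 ?_).trans_eq (degree_eq_natDegree hp0)
    rw [leadingCoeff_mul, leadingCoeff_C, (tauPoly_monic θ i j).leadingCoeff, mul_one]
  have hlead : aeval A lead w = p.leadingCoeff • aeval A (tauPoly θ i j) w := by
    rw [map_mul, aeval_C, Module.End.mul_apply, Module.algebraMap_end_apply]
  have hlead_mem : aeval A lead w ∈ W.map (aeval A (tauPoly θ i j)) :=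
    hlead ▸ Submodule.smul_mem _ _ (Submodule.mem_map_of_mem hw)
  have hlead_eq_neg : aeval A lead w = -aeval A (p - lead) w := by
    rw [map_sub, LinearMap.sub_apply, hpw, zero_sub, neg_neg]
  have hlead_mem_lower : aeval A lead w ∈
      ⨆ k ∈ Finset.Ico i j, W.map (aeval A (tauPoly θ i k)) :=
    hlead_eq_neg ▸ Submodule.neg_mem _ (aeval_apply_mem_iSup_map_tauPoly A θ W hrest hw)
  have hzero := Submodule.disjoint_def.mp (disjoint_map_tauPoly_iSup A hdirect (by omega) hjm)
    _ hlead_mem hlead_mem_lower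
  rw [hlead, smul_eq_zero] at hzero
  exact hzero.elim (leadingCoeff_ne_zero.mpr hp0)
    (aeval_tauPoly_apply_ne_zero A hinj (by omega) hjm hw hw0)

lemma aeval_tauPoly_apply_eq_zero {d : ℕ} {E : ℕ → Module.End K V}
    (hE : ∑ h ∈ Finset.range (d + 1), E h = 1)
    (hAE : ∀ h ∈ Finset.range (d + 1), A * E h = θ h • E h)
    {w : V} (hw : ∀ h ≤ d, (h < i ∨ m < h) → E h w = 0) :
    aeval A (tauPoly θ i (m + 1)) w = 0 :=
  aeval_apply_eq_zero_of_forall hE hAE fun h hh => by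
    by_cases hmid : h ∈ Finset.Ico i (m + 1)
    · exact .inl (eval_tauPoly_eq_zero θ hmid)
    · simp only [Finset.mem_range, Finset.mem_Ico] at hh hmid
      exact .inr (hw h (by omega) (by omega))

end TauImages

theorem stmt19_general {K V : Type*} [Field K] [AddCommGroup V] [Module K V]
    (d : ℕ) (A : Module.End K V) (θ : ℕ → K)
    (E : ℕ → Module.End K V)
    (hE1 : ∀ i ≤ d, ∀ j ≤ d, E i * E j = if i = j then E i else 0)
    (hE2 : ∑ i ∈ Finset.range (d + 1), E i = 1)
    (hE3 : A = ∑ i ∈ Finset.range (d + 1), θ i • E i)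
    (i : ℕ)
    (W : Submodule K V) (hW0 : W ≠ ⊥)
    (hWE : ∀ h ≤ d, (h < i ∨ d - i < h) → Submodule.map (E h) W = ⊥)
    (hWinj : ∀ w ∈ W, (Polynomial.aeval A (tauPoly θ i (d - i))) w = 0 → w = 0)
    (hdirect : iSupIndep (fun j : {j : ℕ // i ≤ j ∧ j ≤ d - i} =>
      Submodule.map (Polynomial.aeval A (tauPoly θ i j)) W)) :
    (⨆ n : ℕ, Submodule.map (A ^ n) W) =
      (⨆ j ∈ Finset.Icc i (d - i),
        Submodule.map (Polynomial.aeval A (tauPoly θ i j)) W) ∧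
    (∀ w ∈ (⨆ n : ℕ, Submodule.map (A ^ n) W),
      (Polynomial.aeval A (tauPoly θ i (d - i + 1))) w = 0) ∧
    (∀ p : Polynomial K,
      (∀ w ∈ (⨆ n : ℕ, Submodule.map (A ^ n) W),
        (Polynomial.aeval A p) w = 0) →
      tauPoly θ i (d - i + 1) ∣ p) := by
  have hAE : ∀ h ∈ Finset.range (d + 1), A * E h = θ h • E h := fun h hh =>
    hE3 ▸ sum_smul_mul_eq_smul θ hh fun j hj =>
      hE1 j (Nat.lt_succ_iff.mp (Finset.mem_range.mp hj)) h
        (Nat.lt_succ_iff.mp (Finset.mem_range.mp hh))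
  have hkill : ∀ w ∈ W, aeval A (tauPoly θ i (d - i + 1)) w = 0 := fun w hw =>
    aeval_tauPoly_apply_eq_zero A hE2 hAE fun h hh hout => by
      simpa [hWE h hh hout] using Submodule.mem_map_of_mem (f := E h) hw
  have hmod : ∀ p : K[X], (p %ₘ tauPoly θ i (d - i + 1)).degree < (d - i + 1 - i : ℕ) :=
    fun p => by
      simpa [degree_eq_natDegree (tauPoly_monic θ i _).ne_zero, natDegree_tauPoly] using
        degree_modByMonic_lt p (tauPoly_monic θ i (d - i + 1))
  have hIcc : Finset.Icc i (d - i) = Finset.Ico i (i + (d - i + 1 - i)) := by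
    ext; simp only [Finset.mem_Icc, Finset.mem_Ico]; omega
  refine ⟨le_antisymm ?_ ?_, fun w hw => iSup_map_pow_le_ker_aeval A W hkill hw, fun p hp => ?_⟩
  · refine iSup_le fun n => ?_
    rintro _ ⟨w, hw, rfl⟩
    rw [← aeval_X_pow (R := K), ← aeval_modByMonic_apply_of_apply_eq_zero A (hkill w hw), hIcc]
    exact aeval_apply_mem_iSup_map_tauPoly A θ W (hmod _) hw
  · exact iSup₂_le fun j _ => map_aeval_le_iSup_map_pow A W _
  · obtain ⟨w, hw, hw0⟩ := W.ne_bot_iff.mp hW0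
    rw [← modByMonic_eq_zero_iff_dvd (tauPoly_monic θ i _)]
    refine eq_zero_of_degree_lt_of_aeval_apply_eq_zero A hdirect hWinj hw hw0 (hmod p) ?_
    rw [aeval_modByMonic_apply_of_apply_eq_zero A (hkill w hw)]
    exact hp w (Submodule.mem_iSup_of_mem 0 (by simpa using hw))

theorem stmt19 {K V : Type*} [Field K] [AddCommGroup V] [Module K V]
    [FiniteDimensional K V] (d : ℕ) (A : Module.End K V) (θ : ℕ → K)
    (hdist : ∀ i ≤ d, ∀ j ≤ d, θ i = θ j → i = j)
    (E : ℕ → Module.End K V)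
    (hE1 : ∀ i ≤ d, ∀ j ≤ d, E i * E j = if i = j then E i else 0)
    (hE2 : ∑ i ∈ Finset.range (d + 1), E i = 1)
    (hE3 : A = ∑ i ∈ Finset.range (d + 1), θ i • E i)
    (heig : ∀ i ≤ d, E i ≠ 0)
    (i : ℕ) (hi : 2 * i ≤ d)
    (W : Submodule K V) (hW0 : W ≠ ⊥)
    (hWE : ∀ h ≤ d, (h < i ∨ d - i < h) → Submodule.map (E h) W = ⊥)
    (hWinj : ∀ w ∈ W, (Polynomial.aeval A (tauPoly θ i (d - i))) w = 0 → w = 0)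
    (hdirect : iSupIndep (fun j : {j : ℕ // i ≤ j ∧ j ≤ d - i} =>
      Submodule.map (Polynomial.aeval A (tauPoly θ i j)) W)) :
    (⨆ n : ℕ, Submodule.map (A ^ n) W) =
      (⨆ j ∈ Finset.Icc i (d - i),
        Submodule.map (Polynomial.aeval A (tauPoly θ i j)) W) ∧
    (∀ w ∈ (⨆ n : ℕ, Submodule.map (A ^ n) W),
      (Polynomial.aeval A (tauPoly θ i (d - i + 1))) w = 0) ∧
    (∀ p : Polynomial K,
      (∀ w ∈ (⨆ n : ℕ, Submodule.map (A ^ n) W),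
        (Polynomial.aeval A p) w = 0) →
      tauPoly θ i (d - i + 1) ∣ p) :=
  stmt19_general d A θ E hE1 hE2 hE3 i W hW0 hWE hWinj hdirect
end
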